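/- arXiv:2407.11247 — 8 statements merged into one kernel-verified Lean document; each statement's English description precedes it below -/
import Mathlib

section
/- Let x and y be unit quaternions (quaternions of norm 1 in ℍ). Then x*y*x⁻¹*y⁻¹ = -1 if and only if re(x) = 0, re(y) = 0, and re(x * star y) = 0. (In SU(2)-language: the commutator of two elements of SU(2) equals -1 if and only if both elements are traceless and they are perpendicular.) -/
/-!
For nonzero `x`, `y` in a division ring, `x * y * x⁻¹ * y⁻¹ = -1` says that `x` and `y`
anticommute. Since `re` is invariant under conjugation, `x * y * x⁻¹ = -y` forces `re y = 0`,
and symmetrically `re x = 0`. For pure quaternions `star (x * y) = y * x`, so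
`x * y + y * x = 2 re (x * y) = -2 re (x * star y)`, which vanishes exactly when `x ⟂ y`.
-/

open Quaternion

theorem mul_mul_inv_mul_inv_eq_neg_one_iff {α : Type*} [DivisionRing α] {a b : α}
    (ha : a ≠ 0) (hb : b ≠ 0) : a * b * a⁻¹ * b⁻¹ = -1 ↔ a * b = -(b * a) := by
  rw [mul_inv_eq_iff_eq_mul₀ hb, mul_inv_eq_iff_eq_mul₀ ha, neg_one_mul, neg_mul]

namespace Quaternion

variable {R : Type*}

theorem re_mul_comm [CommRing R] (a b : ℍ[R]) : (a * b).re = (b * a).re := by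
  simp only [re_mul]
  ring

theorem mul_eq_neg_mul_iff_of_re_eq_zero [CommRing R] [NoZeroDivisors R] [CharZero R]
    {a b : ℍ[R]} (ha : a.re = 0) (hb : b.re = 0) :
    a * b = -(b * a) ↔ (a * star b).re = 0 := by
  have hstar : star (a * b) = b * a := by
    rw [star_mul, star_eq_neg.2 ha, star_eq_neg.2 hb, neg_mul_neg]
  rw [star_eq_neg.2 hb, mul_neg, re_neg, neg_eq_zero, ← hstar, ← add_eq_zero_iff_eq_neg,
    self_add_star', ← coe_zero, coe_inj, mul_eq_zero, or_iff_right two_ne_zero]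

variable [Field R] [LinearOrder R] [IsStrictOrderedRing R]

theorem re_mul_mul_inv {a : ℍ[R]} (ha : a ≠ 0) (b : ℍ[R]) : (a * b * a⁻¹).re = b.re := by
  rw [mul_assoc, re_mul_comm, mul_assoc, inv_mul_cancel₀ ha, mul_one]

theorem re_eq_zero_of_mul_eq_neg_mul {a b : ℍ[R]} (ha : a ≠ 0) (h : a * b = -(b * a)) :
    b.re = 0 := by
  have hconj : a * b * a⁻¹ = -b := by rw [h, neg_mul, mul_inv_cancel_right₀ ha]
  have := re_mul_mul_inv ha b
  rw [hconj, re_neg] at this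
  linarith

theorem mul_eq_neg_mul_iff {a b : ℍ[R]} (ha : a ≠ 0) (hb : b ≠ 0) :
    a * b = -(b * a) ↔ a.re = 0 ∧ b.re = 0 ∧ (a * star b).re = 0 := by
  refine ⟨fun h ↦ ?_, fun ⟨hra, hrb, hperp⟩ ↦ (mul_eq_neg_mul_iff_of_re_eq_zero hra hrb).2 hperp⟩
  have hra : a.re = 0 := re_eq_zero_of_mul_eq_neg_mul hb (by rw [h, neg_neg])
  have hrb : b.re = 0 := re_eq_zero_of_mul_eq_neg_mul ha h
  exact ⟨hra, hrb, (mul_eq_neg_mul_iff_of_re_eq_zero hra hrb).1 h⟩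

end Quaternion

/-- The commutator of two unit quaternions (elements of SU(2)) equals `-1` if and only if
both elements are traceless and they are perpendicular, i.e. `re x = 0`, `re y = 0`, and
`re (x * star y) = 0`. -/
theorem commutator_eq_neg_one_iff (x y : ℍ[ℝ]) (hx : ‖x‖ = 1) (hy : ‖y‖ = 1) :
    x * y * x⁻¹ * y⁻¹ = -1 ↔ x.re = 0 ∧ y.re = 0 ∧ (x * star y).re = 0 := by
  have hx0 : x ≠ 0 := norm_ne_zero_iff.1 (by rw [hx]; exact one_ne_zero)
  have hy0 : y ≠ 0 := norm_ne_zero_iff.1 (by rw [hy]; exact one_ne_zero)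
  rw [mul_mul_inv_mul_inv_eq_neg_one_iff hx0 hy0, mul_eq_neg_mul_iff hx0 hy0]
end

section
/- Let s ∈ ℝ and let a, b, f, h be unit quaternions with re(b) = 0 and re(h) = 0. Set p = exp(s · im(b*h)) and q = exp(s · im(f*a⁻¹*h)), where exp is the quaternion exponential and im(x) = x − re(x). Then p⁻¹ * a * f⁻¹ * q * f = h * p * q * h⁻¹ * a. (Part of Lemma 2.2 (shuffle) of the paper: the components of the slice map L_s satisfy the relation p̄ a f̄ q f = h p q h̄ a.) -/
/-!
Conjugation commutes with `x ↦ exp (s • im x)`. Conjugating by the pure quaternion `h` turns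
`b * h` into `h * b = star (b * h)`, so `h p h⁻¹ = p⁻¹`; conjugating `q` by `h` or by `a f⁻¹`
gives the same `exp (s • im (h f a⁻¹))`. Hence both sides equal
`p⁻¹ · (a f⁻¹) q (a f⁻¹)⁻¹ · a = (h p h⁻¹) (h q h⁻¹) a`.
-/

open Quaternion

namespace Quaternion

section CommRing

variable {R : Type*} [CommRing R]

theorem re_mul_comm_s1 (x y : ℍ[R]) : (x * y).re = (y * x).re := by
  simp only [re_mul]; ring

theorem star_eq_neg_of_re_eq_zero {x : ℍ[R]} (hx : x.re = 0) :
    star x = -x := by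
  ext <;> simp [hx]

theorem im_mul_comm_of_re_eq_zero {x y : ℍ[R]}
    (hx : x.re = 0) (hy : y.re = 0) : (y * x).im = -(x * y).im := by
  have hstar : y * x = star (x * y) := by
    rw [star_mul, star_eq_neg_of_re_eq_zero hx, star_eq_neg_of_re_eq_zero hy, neg_mul_neg]
  rw [hstar, im_star]

end CommRing

theorem im_conj {R : Type*} [Field R] [LinearOrder R] [IsStrictOrderedRing R] {g : ℍ[R]}
    (hg : g ≠ 0) (x : ℍ[R]) : (g * x * g⁻¹).im = g * x.im * g⁻¹ := by
  have hre : (g * x * g⁻¹).re = x.re := by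
    rw [re_mul_comm_s1, ← mul_assoc, inv_mul_cancel₀ hg, one_mul]
  have hcoe : g * (x.re : ℍ[R]) * g⁻¹ = x.re := by
    rw [← coe_commutes, mul_assoc, mul_inv_cancel₀ hg, mul_one]
  rw [← Quaternion.sub_re_self, hre, ← Quaternion.sub_re_self x, mul_sub, sub_mul, hcoe]

theorem exp_smul_im_conj {g : ℍ[ℝ]} (hg : g ≠ 0) (s : ℝ) (x : ℍ[ℝ]) :
    NormedSpace.exp (s • (g * x * g⁻¹).im) = g * NormedSpace.exp (s • x.im) * g⁻¹ := by
  let +nondep : NormedAlgebra ℚ ℍ := .restrictScalars ℚ ℝ ℍ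
  rw [im_conj hg, ← NormedSpace.exp_conj _ _ hg, mul_smul_comm, smul_mul_assoc]

theorem conj_exp_smul_im_mul_of_re_eq_zero {b h : ℍ[ℝ]} (hb : b.re = 0) (hh : h.re = 0)
    (hh0 : h ≠ 0) (s : ℝ) :
    h * NormedSpace.exp (s • (b * h).im) * h⁻¹ = (NormedSpace.exp (s • (b * h).im))⁻¹ := by
  let +nondep : NormedAlgebra ℚ ℍ := .restrictScalars ℚ ℝ ℍ
  rw [← exp_smul_im_conj hh0, mul_assoc, mul_assoc b, mul_inv_cancel₀ hh0, mul_one,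
    im_mul_comm_of_re_eq_zero hb hh, smul_neg, NormedSpace.exp_neg]

end Quaternion

theorem shuffle_relation_general (s : ℝ) (a b f h : ℍ[ℝ])
    (ha : ‖a‖ = 1) (hf : ‖f‖ = 1) (hh : ‖h‖ = 1)
    (hbre : b.re = 0) (hhre : h.re = 0)
    (p q : ℍ[ℝ])
    (hp : p = NormedSpace.exp (s • Quaternion.im (b * h)))
    (hq : q = NormedSpace.exp (s • Quaternion.im (f * a⁻¹ * h))) :
    p⁻¹ * a * f⁻¹ * q * f = h * p * q * h⁻¹ * a := by
  have ha0 : a ≠ 0 := norm_ne_zero_iff.mp (by simp [ha])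
  have hf0 : f ≠ 0 := norm_ne_zero_iff.mp (by simp [hf])
  have hh0 : h ≠ 0 := norm_ne_zero_iff.mp (by simp [hh])
  have hp_conj : h * p * h⁻¹ = p⁻¹ := hp ▸ conj_exp_smul_im_mul_of_re_eq_zero hbre hhre hh0 s
  have hq_conj_h : h * q * h⁻¹ = NormedSpace.exp (s • (h * f * a⁻¹).im) := by
    rw [hq, ← exp_smul_im_conj hh0]
    simp only [mul_assoc, mul_inv_cancel₀ hh0, mul_one]
  have hq_conj_af : a * f⁻¹ * q * (a * f⁻¹)⁻¹ = NormedSpace.exp (s • (h * f * a⁻¹).im) := by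
    rw [hq, ← exp_smul_im_conj (mul_ne_zero ha0 (inv_ne_zero hf0))]
    simp only [mul_inv_rev, inv_inv, mul_assoc, inv_mul_cancel_left₀ hf0,
      mul_inv_cancel_left₀ ha0]
  calc p⁻¹ * a * f⁻¹ * q * f = p⁻¹ * (a * f⁻¹ * q * (a * f⁻¹)⁻¹) * a := by
        simp only [mul_inv_rev, inv_inv, mul_assoc, inv_mul_cancel₀ ha0, mul_one]
    _ = h * p * h⁻¹ * (h * q * h⁻¹) * a := by rw [hp_conj, hq_conj_h, hq_conj_af]
    _ = h * p * q * h⁻¹ * a := by simp only [mul_assoc, inv_mul_cancel_left₀ hh0]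

/-- Part of Lemma 2.2 (shuffle): with `p = exp(s·im(b h))` and `q = exp(s·im(f a⁻¹ h))`, where
`a, b, f, h` are unit quaternions with `re b = 0` and `re h = 0`, the relation
`p̄ a f̄ q f = h p q h̄ a` holds. -/
theorem shuffle_relation (s : ℝ) (a b f h : ℍ[ℝ])
    (ha : ‖a‖ = 1) (hb : ‖b‖ = 1) (hf : ‖f‖ = 1) (hh : ‖h‖ = 1)
    (hbre : b.re = 0) (hhre : h.re = 0)
    (p q : ℍ[ℝ])
    (hp : p = NormedSpace.exp (s • Quaternion.im (b * h)))
    (hq : q = NormedSpace.exp (s • Quaternion.im (f * a⁻¹ * h))) :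
    p⁻¹ * a * f⁻¹ * q * f = h * p * q * h⁻¹ * a :=
  shuffle_relation_general s a b f h ha hf hh hbre hhre p q hp hq
end

section
/- Let a, p, q, h be unit quaternions with re(h) = 0, and set x = a⁻¹ * h * q⁻¹ * p⁻¹ and w = x * h * x⁻¹ * h⁻¹ (the commutator [x, h]). Then w = −1 if and only if re(a⁻¹ * h * q⁻¹ * p⁻¹) = 0 and re(h * a⁻¹ * h * q⁻¹ * p⁻¹) = 0. (The equivalence from Lemma 2.2 of the paper: the w₂ condition [ā h q̄ p̄, h] = −1 holds if and only if G(s, ·) = (0, 0).) -/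
/-! `[x, h] = -1` says exactly that `x` and `h` anticommute. For purely imaginary `h` the
anticommutator is `x h + h x = 2 re(x) h + 2 re(h x)`, a pure part plus a real part, so it
vanishes iff `re x = 0` and `re (h x) = 0`. -/

open Quaternion

theorem commutator_eq_neg_one_iff_s3 {R : Type*} [DivisionRing R] {x h : R} (hx : x ≠ 0)
    (hh : h ≠ 0) : x * h * x⁻¹ * h⁻¹ = -1 ↔ x * h = -(h * x) := by
  rw [mul_inv_eq_iff_eq_mul₀ hh, mul_inv_eq_iff_eq_mul₀ hx, neg_one_mul, neg_mul]

namespace Quaternion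

theorem mul_add_mul_swap_of_re_eq_zero (x : ℍ[ℝ]) {h : ℍ[ℝ]} (hre : h.re = 0) :
    x * h + h * x = ((2 * x.re : ℝ) : ℍ[ℝ]) * h + ((2 * (h * x).re : ℝ) : ℍ[ℝ]) := by
  ext <;> simp [re_mul, imI_mul, imJ_mul, imK_mul, hre] <;> ring

theorem mul_eq_neg_mul_iff_of_re_eq_zero_s3 (x : ℍ[ℝ]) {h : ℍ[ℝ]} (h0 : h ≠ 0)
    (hre : h.re = 0) : x * h = -(h * x) ↔ x.re = 0 ∧ (h * x).re = 0 := by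
  rw [← add_eq_zero_iff_eq_neg, mul_add_mul_swap_of_re_eq_zero x hre]
  constructor
  · intro hsum
    have hc : (h * x).re = 0 := by simpa [hre] using congrArg QuaternionAlgebra.re hsum
    rw [hc, mul_zero, coe_zero, add_zero, mul_eq_zero] at hsum
    refine ⟨?_, hc⟩
    exact (mul_eq_zero.mp (coe_injective (hsum.resolve_right h0))).resolve_left two_ne_zero
  · rintro ⟨hr, hc⟩
    simp [hr, hc]

end Quaternion

/-- The equivalence from Lemma 2.2 of the paper: for unit quaternions `a, p, q, h` with
`re h = 0`, setting `x = a⁻¹ h q⁻¹ p⁻¹`, the `w₂` condition `[x, h] = -1` holds if and only if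
`re(a⁻¹ h q⁻¹ p⁻¹) = 0` and `re(h a⁻¹ h q⁻¹ p⁻¹) = 0`. -/
theorem w2_condition_iff (a p q h : ℍ[ℝ])
    (ha : ‖a‖ = 1) (hp : ‖p‖ = 1) (hq : ‖q‖ = 1) (hh : ‖h‖ = 1)
    (hhre : h.re = 0)
    (x w : ℍ[ℝ]) (hx : x = a⁻¹ * h * q⁻¹ * p⁻¹) (hw : w = x * h * x⁻¹ * h⁻¹) :
    w = -1 ↔ (a⁻¹ * h * q⁻¹ * p⁻¹).re = 0 ∧ (h * (a⁻¹ * h * q⁻¹ * p⁻¹)).re = 0 := by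
  have hh0 : h ≠ 0 := norm_ne_zero_iff.mp (by simp [hh])
  have hx0 : x ≠ 0 := norm_ne_zero_iff.mp (by simp [hx, ha, hp, hq, hh])
  rw [← hx, hw, commutator_eq_neg_one_iff_s3 hx0 hh0,
    Quaternion.mul_eq_neg_mul_iff_of_re_eq_zero_s3 x hh0 hhre]
end

section
/- There do not exist real numbers γ, θ, τ satisfying simultaneously: sin θ · cos τ − sin γ · sin τ = 0, cos γ · sin τ = 0, cos θ · cos τ = 0, and sin γ · cos τ + sin θ · sin τ = 0. Consequently, (0,0) is a regular value of the map Φ₀ : ℝ⁴ → ℝ², Φ₀(γ, θ, τ, ν) = (sin θ cos τ − sin γ sin τ, ν): at every zero of Φ₀ the derivative of Φ₀ is surjective. (The regular-value step in Corollary 3.3 of the paper, showing V₀ = Φ₀⁻¹(0,0) is a smooth surface.) -/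
open Real

/-!
The gradient of `sin θ cos τ − sin γ sin τ` is
`(−cos γ sin τ, cos θ cos τ, −(sin γ cos τ + sin θ sin τ))`. Its first and third entries together
with the function itself are, up to sign, the rotation by `τ` applied to `(sin θ, sin γ)`, so if
all four vanish then `sin θ = sin γ = 0`; then `cos γ = ±1` and `cos θ = ±1` force
`sin τ = cos τ = 0`, which is impossible. Hence the gradient never vanishes where `Φ₀` does, and
moving along it in `(γ, θ, τ)` while moving `ν` independently reaches every target.
-/

noncomputable def Phi0 (x : ℝ × ℝ × ℝ × ℝ) : ℝ × ℝ :=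
  (sin x.2.1 * cos x.2.2.1 - sin x.1 * sin x.2.2.1, x.2.2.2)

lemma eq_zero_of_rotation_eq_zero {a b c s : ℝ} (hsc : s ^ 2 + c ^ 2 = 1)
    (h₁ : a * c - b * s = 0) (h₂ : b * c + a * s = 0) : a = 0 ∧ b = 0 :=
  ⟨by linear_combination c * h₁ + s * h₂ - a * hsc,
   by linear_combination c * h₂ - s * h₁ - b * hsc⟩

lemma not_sin_cos_system (γ θ τ : ℝ) :
    ¬ (sin θ * cos τ - sin γ * sin τ = 0 ∧ cos γ * sin τ = 0 ∧ cos θ * cos τ = 0 ∧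
        sin γ * cos τ + sin θ * sin τ = 0) := by
  rintro ⟨h₁, h₂, h₃, h₄⟩
  obtain ⟨hθ, hγ⟩ := eq_zero_of_rotation_eq_zero (sin_sq_add_cos_sq τ) h₁ h₄
  have hcosγ : cos γ ^ 2 = 1 := by linear_combination sin_sq_add_cos_sq γ - sin γ * hγ
  have hcosθ : cos θ ^ 2 = 1 := by linear_combination sin_sq_add_cos_sq θ - sin θ * hθ
  have hsin : sin τ = 0 := by linear_combination cos γ * h₂ - sin τ * hcosγ
  have hcos : cos τ = 0 := by linear_combination cos θ * h₃ - cos τ * hcosθ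
  simpa [hsin, hcos] using sin_sq_add_cos_sq τ

lemma fderiv_Phi0_apply (γ θ τ ν : ℝ) (v : ℝ × ℝ × ℝ × ℝ) :
    fderiv ℝ Phi0 (γ, θ, τ, ν) v =
      (-(cos γ * sin τ) * v.1 + cos θ * cos τ * v.2.1
        - (sin γ * cos τ + sin θ * sin τ) * v.2.2.1, v.2.2.2) := by
  set x : ℝ × ℝ × ℝ × ℝ := (γ, θ, τ, ν)
  have hγ := hasFDerivAt_fst (𝕜 := ℝ) (p := x)
  have hθ := (hasFDerivAt_snd (𝕜 := ℝ) (p := x)).fst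
  have hτ := (hasFDerivAt_snd (𝕜 := ℝ) (p := x)).snd.fst
  have hν := (hasFDerivAt_snd (𝕜 := ℝ) (p := x)).snd.snd
  have hΦ : HasFDerivAt Phi0 _ x := ((hθ.sin.mul hτ.cos).sub (hγ.sin.mul hτ.sin)).prodMk hν
  rw [hΦ.fderiv]
  refine Prod.ext ?_ rfl
  simp only [x, ContinuousLinearMap.prod_apply, sub_apply, add_apply, smul_apply,
    ContinuousLinearMap.comp_apply, ContinuousLinearMap.coe_fst', ContinuousLinearMap.coe_snd',
    smul_eq_mul]
  ring

lemma surjective_of_apply_eq {L : ℝ × ℝ × ℝ × ℝ →L[ℝ] ℝ × ℝ} {p q r : ℝ}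
    (hL : ∀ v, L v = (p * v.1 + q * v.2.1 + r * v.2.2.1, v.2.2.2))
    (hpqr : p ^ 2 + q ^ 2 + r ^ 2 ≠ 0) : Function.Surjective L := by
  rintro ⟨a, b⟩
  set n := p ^ 2 + q ^ 2 + r ^ 2
  refine ⟨(a * p / n, a * q / n, a * r / n, b), ?_⟩
  rw [hL]
  refine Prod.ext ?_ rfl
  field_simp
  ring

/-- The regular-value step in Corollary 3.3 of the paper.  There are no real numbers
`γ, θ, τ` with `sin θ cos τ − sin γ sin τ = 0`, `cos γ sin τ = 0`, `cos θ cos τ = 0`, and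
`sin γ cos τ + sin θ sin τ = 0`; consequently `(0,0)` is a regular value of
`Φ₀(γ, θ, τ, ν) = (sin θ cos τ − sin γ sin τ, ν)`: at every zero of `Φ₀` the derivative of
`Φ₀` is surjective. -/
theorem regular_value_zero_of_Phi0 :
    (¬ ∃ γ θ τ : ℝ,
        sin θ * cos τ - sin γ * sin τ = 0 ∧
        cos γ * sin τ = 0 ∧
        cos θ * cos τ = 0 ∧
        sin γ * cos τ + sin θ * sin τ = 0) ∧
    (∀ x : ℝ × ℝ × ℝ × ℝ,
        (fun x : ℝ × ℝ × ℝ × ℝ =>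
            ((sin x.2.1 * cos x.2.2.1 - sin x.1 * sin x.2.2.1, x.2.2.2) : ℝ × ℝ)) x = (0, 0) →
        Function.Surjective
          (fderiv ℝ (fun x : ℝ × ℝ × ℝ × ℝ =>
            ((sin x.2.1 * cos x.2.2.1 - sin x.1 * sin x.2.2.1, x.2.2.2) : ℝ × ℝ)) x)) := by
  refine ⟨fun ⟨γ, θ, τ, h⟩ => not_sin_cos_system γ θ τ h, ?_⟩
  rintro ⟨γ, θ, τ, ν⟩ hzero
  change Function.Surjective (fderiv ℝ Phi0 (γ, θ, τ, ν))
  have hΦ : sin θ * cos τ - sin γ * sin τ = 0 := congrArg Prod.fst hzero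
  have hgrad : (-(cos γ * sin τ)) ^ 2 + (cos θ * cos τ) ^ 2
      + (-(sin γ * cos τ + sin θ * sin τ)) ^ 2 ≠ 0 := by
    intro h
    refine not_sin_cos_system γ θ τ ⟨hΦ, ?_, ?_, ?_⟩ <;> nlinarith [sq_nonneg (cos γ * sin τ),
      sq_nonneg (cos θ * cos τ), sq_nonneg (sin γ * cos τ + sin θ * sin τ)]
  refine surjective_of_apply_eq (fun v => ?_) hgrad
  rw [fderiv_Phi0_apply]
  exact Prod.ext (by ring) rfl
end

section
/- For real s, γ, θ, τ and ν ∈ [−1/2, 1/2], set a = i, b = cos γ · i + sin γ · j, f = cos θ · i + sin θ · j, h = ν · i + √(1 − ν²) · (cos τ · j + sin τ · k), p = exp(s · im(b*h)), q = exp(s · im(f*a⁻¹*h)), and G₂ = re(p * q * star(h) * a). Then there exist s₀ ∈ (0, 1] and C > 0 such that for all s with |s| ≤ s₀ and all γ, θ, τ ∈ ℝ, ν ∈ [−1/2, 1/2]: |G₂ − (ν − s·cos γ)| ≤ C·(s² + |s·ν|). (The second-order expansion of G₂ in Lemma 3.1 of the paper: G₂ = (1 − sR₆)(ν − s cos γ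 + s²R₃).) -/
/-!
To first order in any real Banach algebra, `exp x · exp y = 1 + x + y + O(ε²)` when
`‖x‖, ‖y‖ ≤ ε ≤ 1`. Here `x = s·im(b h)` and `y = s·im(f a⁻¹ h)` have norm at most `|s|`, and
`u = star(h)·a` is a unit quaternion with `re u = ν`, so
`G₂ = re(p q u) = ν + s·re((im(b h) + im(f a⁻¹ h))·u) + O(s²)`.
An explicit computation gives that first-order coefficient as
`−cos γ·(1 − ν²) + ν·√(1 − ν²)·(sin γ cos τ + sin θ sin τ)`, which is `−cos γ + O(ν)`.
-/

open Quaternion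

/-- The imaginary unit `i` of the quaternions. -/
noncomputable def qi : ℍ[ℝ] := ⟨0, 1, 0, 0⟩
/-- The imaginary unit `j` of the quaternions. -/
noncomputable def qj : ℍ[ℝ] := ⟨0, 0, 1, 0⟩
/-- The imaginary unit `k` of the quaternions. -/
noncomputable def qk : ℍ[ℝ] := ⟨0, 0, 0, 1⟩

/-- `a = i`. -/
noncomputable def qa : ℍ[ℝ] := qi
/-- `b = cos γ · i + sin γ · j`. -/
noncomputable def qb (γ : ℝ) : ℍ[ℝ] := Real.cos γ • qi + Real.sin γ • qj
/-- `f = cos θ · i + sin θ · j`. -/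
noncomputable def qf (θ : ℝ) : ℍ[ℝ] := Real.cos θ • qi + Real.sin θ • qj
/-- `h = ν·i + √(1−ν²)·(cos τ·j + sin τ·k)`. -/
noncomputable def qh (τ ν : ℝ) : ℍ[ℝ] :=
  ν • qi + Real.sqrt (1 - ν ^ 2) • (Real.cos τ • qj + Real.sin τ • qk)
/-- `p = exp(s·im(b·h))`. -/
noncomputable def qp (s γ τ ν : ℝ) : ℍ[ℝ] :=
  NormedSpace.exp (s • Quaternion.im (qb γ * qh τ ν))
/-- `q = exp(s·im(f·a⁻¹·h))`. -/
noncomputable def qq (s θ τ ν : ℝ) : ℍ[ℝ] :=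
  NormedSpace.exp (s • Quaternion.im (qf θ * qa⁻¹ * qh τ ν))
/-- The earring defining function `G₂ = re(p·q·star(h)·a)`. -/
noncomputable def G2 (s γ θ τ ν : ℝ) : ℝ :=
  (qp s γ τ ν * qq s θ τ ν * star (qh τ ν) * qa).re

namespace NormedSpace

variable {𝔸 : Type*} [NormedRing 𝔸] [NormedAlgebra ℝ 𝔸] [CompleteSpace 𝔸]

theorem norm_exp_sub_one_sub_id_le {x : 𝔸} (hx : ‖x‖ ≤ 1) : ‖exp x - 1 - x‖ ≤ ‖x‖ ^ 2 := by
  have hA := (hasSum_nat_add_iff' 2).mpr (exp_series_hasSum_exp' (𝕂 := ℝ) x)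
  have hR := (hasSum_nat_add_iff' 2).mpr (exp_series_hasSum_exp' (𝕂 := ℝ) ‖x‖)
  simp only [Finset.sum_range_succ, Finset.sum_range_zero, Nat.factorial_zero,
    Nat.factorial_one, Nat.cast_one, inv_one, one_smul, pow_zero, pow_one, zero_add] at hA hR
  calc ‖exp x - 1 - x‖ ≤ exp ‖x‖ - 1 - ‖x‖ := by
        -- the tail `∑ₙ xⁿ⁺²/(n+2)!` is dominated termwise by the real series at `‖x‖`
        rw [sub_sub, sub_sub]
        refine hA.norm_le_of_bounded hR fun n => ?_
        rw [norm_smul, Real.norm_of_nonneg (by positivity)]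
        exact mul_le_mul_of_nonneg_left (norm_pow_le' x (by omega)) (by positivity)
    _ ≤ ‖x‖ ^ 2 := by
        rw [← Real.exp_eq_exp_ℝ]
        exact le_of_abs_le (Real.abs_exp_sub_one_sub_id_le (by rwa [abs_norm]))

variable {x y : 𝔸} {ε : ℝ}

theorem norm_exp_sub_one_sub_le_sq (hε : ε ≤ 1) (hx : ‖x‖ ≤ ε) :
    ‖exp x - 1 - x‖ ≤ ε ^ 2 :=
  (norm_exp_sub_one_sub_id_le (hx.trans hε)).trans (by gcongr)

theorem norm_exp_sub_one_le_two_mul (hε : ε ≤ 1) (hx : ‖x‖ ≤ ε) : ‖exp x - 1‖ ≤ 2 * ε :=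
  calc ‖exp x - 1‖ = ‖(exp x - 1 - x) + x‖ := by rw [sub_add_cancel]
    _ ≤ ε ^ 2 + ε := (norm_add_le _ _).trans (add_le_add (norm_exp_sub_one_sub_le_sq hε hx) hx)
    _ ≤ 2 * ε := by nlinarith [(norm_nonneg x).trans hx]

theorem norm_exp_mul_exp_sub_one_sub_add_le (hε : ε ≤ 1) (hx : ‖x‖ ≤ ε) (hy : ‖y‖ ≤ ε) :
    ‖exp x * exp y - 1 - (x + y)‖ ≤ 6 * ε ^ 2 :=
  calc ‖exp x * exp y - 1 - (x + y)‖
        = ‖(exp x - 1 - x) + (exp y - 1 - y) + (exp x - 1) * (exp y - 1)‖ := by noncomm_ring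
    _ ≤ ε ^ 2 + ε ^ 2 + 2 * ε * (2 * ε) := by
        refine norm_add₃_le.trans (add_le_add (add_le_add (norm_exp_sub_one_sub_le_sq hε hx)
          (norm_exp_sub_one_sub_le_sq hε hy)) ((norm_mul_le _ _).trans ?_))
        exact mul_le_mul (norm_exp_sub_one_le_two_mul hε hx) (norm_exp_sub_one_le_two_mul hε hy)
          (norm_nonneg _) (by linarith [(norm_nonneg x).trans hx])
    _ = 6 * ε ^ 2 := by ring

end NormedSpace

namespace Quaternion

theorem norm_eq_one_of_normSq_eq_one {a : ℍ[ℝ]} (h : normSq a = 1) : ‖a‖ = 1 := by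
  rw [normSq_eq_norm_mul_self, mul_self_eq_one_iff] at h
  exact h.resolve_right (by linarith [norm_nonneg a])

theorem norm_le_norm_of_normSq_le {a b : ℍ[ℝ]} (h : normSq a ≤ normSq b) : ‖a‖ ≤ ‖b‖ := by
  rw [normSq_eq_norm_mul_self, normSq_eq_norm_mul_self] at h
  exact (mul_self_le_mul_self_iff (norm_nonneg a) (norm_nonneg b)).mpr h

theorem abs_re_le_norm (a : ℍ[ℝ]) : |a.re| ≤ ‖a‖ := by
  rw [← Real.norm_eq_abs, ← norm_coe]
  refine norm_le_norm_of_normSq_le ?_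
  rw [normSq_def', normSq_def']
  simp only [re_coe, imI_coe, imJ_coe, imK_coe]
  nlinarith [sq_nonneg a.imI, sq_nonneg a.imJ, sq_nonneg a.imK]

theorem norm_smul_im_le (s : ℝ) (a : ℍ[ℝ]) : ‖s • a.im‖ ≤ |s| * ‖a‖ := by
  rw [norm_smul, Real.norm_eq_abs]
  refine mul_le_mul_of_nonneg_left (norm_le_norm_of_normSq_le ?_) (abs_nonneg s)
  rw [normSq_def', normSq_def']
  simp only [re_im, imI_im, imJ_im, imK_im]
  nlinarith [sq_nonneg a.re]

end Quaternion

theorem qa_inv : qa⁻¹ = -qa :=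
  inv_eq_of_mul_eq_one_right <| by
    ext <;> simp [qa, re_mul, imI_mul, imJ_mul, imK_mul] <;> simp [qi]

theorem norm_qa : ‖qa‖ = 1 :=
  norm_eq_one_of_normSq_eq_one (by rw [normSq_def']; simp [qa, qi])

theorem norm_qb (γ : ℝ) : ‖qb γ‖ = 1 :=
  norm_eq_one_of_normSq_eq_one (by simp [normSq_def', qb, re_smul]; simp [qi, qj])

theorem norm_qf (θ : ℝ) : ‖qf θ‖ = 1 :=
  norm_eq_one_of_normSq_eq_one (by simp [normSq_def', qf, re_smul]; simp [qi, qj])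

theorem norm_qh (τ : ℝ) {ν : ℝ} (hν : ν ^ 2 ≤ 1) : ‖qh τ ν‖ = 1 := by
  refine norm_eq_one_of_normSq_eq_one ?_
  simp [normSq_def', qh, re_smul]; simp [qi, qj, qk]
  linear_combination Real.sq_sqrt (by linarith : 0 ≤ 1 - ν ^ 2) +
    √(1 - ν ^ 2) ^ 2 * Real.sin_sq_add_cos_sq τ

theorem re_star_qh_mul_qa (τ ν : ℝ) : (star (qh τ ν) * qa).re = ν := by
  simp [qh, qa, re_mul, re_smul]; simp [qi, qj, qk]

/-- The coefficient of `s` in `G₂`. -/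
noncomputable def G2FirstOrder (γ θ τ ν : ℝ) : ℝ :=
  (((qb γ * qh τ ν).im + (qf θ * qa⁻¹ * qh τ ν).im) * (star (qh τ ν) * qa)).re

theorem G2FirstOrder_eq (γ θ τ ν : ℝ) :
    G2FirstOrder γ θ τ ν =
      -Real.cos γ * √(1 - ν ^ 2) ^ 2 +
        ν * √(1 - ν ^ 2) * (Real.sin γ * Real.cos τ + Real.sin θ * Real.sin τ) := by
  rw [G2FirstOrder, qa_inv]
  simp [qh, qa, qb, qf, re_mul, imI_mul, imJ_mul, imK_mul, re_smul]; simp [qi, qj, qk]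
  linear_combination (-Real.cos γ * √(1 - ν ^ 2) ^ 2) * Real.sin_sq_add_cos_sq τ

theorem abs_G2FirstOrder_add_cos_le (γ θ τ : ℝ) {ν : ℝ} (hν : ν ^ 2 ≤ 1) :
    |G2FirstOrder γ θ τ ν + Real.cos γ| ≤ 3 * |ν| := by
  set w := √(1 - ν ^ 2)
  have hν1 : |ν| ≤ 1 := (sq_le_one_iff_abs_le_one ν).mp hν
  have hw1 : |w| ≤ 1 := by
    rw [abs_of_nonneg (Real.sqrt_nonneg _)]; exact Real.sqrt_le_one.mpr (by nlinarith)
  have hsplit :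
      -Real.cos γ * w ^ 2 + ν * w * (Real.sin γ * Real.cos τ + Real.sin θ * Real.sin τ)
        + Real.cos γ
      = ν * (ν * Real.cos γ + w * (Real.sin γ * Real.cos τ + Real.sin θ * Real.sin τ)) := by
    linear_combination (-Real.cos γ) * Real.sq_sqrt (by linarith : 0 ≤ 1 - ν ^ 2)
  rw [G2FirstOrder_eq, hsplit, abs_mul, mul_comm 3]
  refine mul_le_mul_of_nonneg_left ?_ (abs_nonneg ν)
  calc |ν * Real.cos γ + w * (Real.sin γ * Real.cos τ + Real.sin θ * Real.sin τ)|
      ≤ |ν * Real.cos γ| + |w| * (|Real.sin γ * Real.cos τ| + |Real.sin θ * Real.sin τ|) := by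
        refine (abs_add_le _ _).trans (add_le_add le_rfl ?_)
        rw [abs_mul]
        exact mul_le_mul_of_nonneg_left (abs_add_le _ _) (abs_nonneg _)
    _ ≤ 1 * 1 + 1 * (1 * 1 + 1 * 1) := by
        simp only [abs_mul]
        gcongr <;> first | assumption | exact Real.abs_cos_le_one _ | exact Real.abs_sin_le_one _
    _ = 3 := by norm_num

theorem norm_qp_mul_qq_sub_one_sub_le {s : ℝ} (γ θ τ : ℝ) {ν : ℝ} (hs : |s| ≤ 1)
    (hν : ν ^ 2 ≤ 1) :
    ‖qp s γ τ ν * qq s θ τ ν - 1 - (s • (qb γ * qh τ ν).im + s • (qf θ * qa⁻¹ * qh τ ν).im)‖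
      ≤ 6 * s ^ 2 := by
  have hx : ‖s • (qb γ * qh τ ν).im‖ ≤ |s| := by
    simpa [norm_qb, norm_qh τ hν] using norm_smul_im_le s (qb γ * qh τ ν)
  have hy : ‖s • (qf θ * qa⁻¹ * qh τ ν).im‖ ≤ |s| := by
    simpa [norm_qf, norm_qa, norm_qh τ hν] using norm_smul_im_le s (qf θ * qa⁻¹ * qh τ ν)
  have h := NormedSpace.norm_exp_mul_exp_sub_one_sub_add_le hs hx hy
  rwa [sq_abs] at h

theorem G2_eq_first_order_add (s γ θ τ ν : ℝ) :
    G2 s γ θ τ ν = ν + s * G2FirstOrder γ θ τ ν +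
      ((qp s γ τ ν * qq s θ τ ν - 1 - (s • (qb γ * qh τ ν).im + s • (qf θ * qa⁻¹ * qh τ ν).im))
        * (star (qh τ ν) * qa)).re := by
  rw [G2, mul_assoc, G2FirstOrder]
  simp only [sub_mul, add_mul, one_mul, smul_mul_assoc, re_sub, re_add, re_smul, smul_eq_mul,
    re_star_qh_mul_qa]
  ring

theorem abs_G2_sub_first_order_le {s : ℝ} (γ θ τ : ℝ) {ν : ℝ} (hs : |s| ≤ 1) (hν : ν ^ 2 ≤ 1) :
    |G2 s γ θ τ ν - (ν + s * G2FirstOrder γ θ τ ν)| ≤ 6 * s ^ 2 := by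
  rw [G2_eq_first_order_add, add_sub_cancel_left]
  refine (abs_re_le_norm _).trans ?_
  rw [norm_mul, norm_mul, norm_star, norm_qh τ hν, norm_qa, mul_one, mul_one]
  exact norm_qp_mul_qq_sub_one_sub_le γ θ τ hs hν

/-- The second-order expansion of `G₂` in Lemma 3.1 of the paper:
`G₂ = (1 − sR₆)(ν − s cos γ + s²R₃)`, in the form of the estimate
`|G₂ − (ν − s·cos γ)| ≤ C·(s² + |s·ν|)` for all small `s`. -/
theorem G2_expansion :
    ∃ s₀ ∈ Set.Ioc (0 : ℝ) 1, ∃ C > (0 : ℝ),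
      ∀ s γ θ τ ν : ℝ, |s| ≤ s₀ → ν ∈ Set.Icc (-(1/2) : ℝ) (1/2) →
        |G2 s γ θ τ ν - (ν - s * Real.cos γ)| ≤ C * (s ^ 2 + |s * ν|) := by
  refine ⟨1, ⟨one_pos, le_rfl⟩, 6, by norm_num, fun s γ θ τ ν hs hν => ?_⟩
  have hν2 : ν ^ 2 ≤ 1 := by nlinarith [hν.1, hν.2]
  have hquad := abs_G2_sub_first_order_le γ θ τ hs hν2
  have hlin : |s * (G2FirstOrder γ θ τ ν + Real.cos γ)| ≤ 3 * |s * ν| := by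
    rw [abs_mul, abs_mul, mul_left_comm]
    exact mul_le_mul_of_nonneg_left (abs_G2FirstOrder_add_cos_le γ θ τ hν2) (abs_nonneg s)
  rw [show G2 s γ θ τ ν - (ν - s * Real.cos γ) = (G2 s γ θ τ ν - (ν + s * G2FirstOrder γ θ τ ν))
    + s * (G2FirstOrder γ θ τ ν + Real.cos γ) by ring]
  linarith [abs_add_le (G2 s γ θ τ ν - (ν + s * G2FirstOrder γ θ τ ν))
    (s * (G2FirstOrder γ θ τ ν + Real.cos γ)), abs_nonneg (s * ν)]
end

section
/- Let s ∈ ℝ and ε₁, ε₂ ∈ {−1, 1}. Set a = i, b = j, f = ε₁·i, h = ε₂·j, p = 1, q = exp((s·ε₁·ε₂)·j) = cos(s ε₁ ε₂) + sin(s ε₁ ε₂)·j. Then: (1) im(b*h) = 0, so p = exp(s·im(b*h)); (2) im(f*a⁻¹*h) = (ε₁ε₂)·j, so q = exp(s·im(f*a⁻¹*h)); (3) re(p*q*star(h)*a) = 0; (4) re(p*q*star(h)*a*star(h)) = 0; (5) re(q⁻¹*p⁻¹*h*p*q*star(h)*a) = 0; (6) re(h*star(a)) = 0. (Proposition 7.2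 of the paper: the four points [π/2, 0, 0, 0], [π/2, 0, 0, π], [π/2, π, 0, 0], [π/2, π, 0, π] satisfy the earring equations G = 0 and the bypass equations G' = 0, hence lie in N_s and N'_s for every s.) -/
open Quaternion

namespace Quaternion

theorem exp_smul_of_re_eq_zero_of_norm_eq_one {u : ℍ[ℝ]} (hu : u.re = 0) (hu₁ : ‖u‖ = 1)
    (t : ℝ) : NormedSpace.exp (t • u) = ↑(Real.cos t) + Real.sin t • u := by
  rw [exp_of_re_eq_zero _ (by simp [hu]), norm_smul, hu₁, mul_one, Real.norm_eq_abs,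
    Real.cos_abs, smul_smul]
  congr 2
  rcases eq_or_ne t 0 with rfl | ht
  · simp
  · rcases abs_cases t with ⟨habs, _⟩ | ⟨habs, _⟩ <;> rw [habs]
    · field_simp
    · rw [Real.sin_neg]; field_simp

theorem re_inv_mul_mul_mul_star_mul {q h : ℍ[ℝ]} (hq : q ≠ 0) (hhq : Commute h q) (a : ℍ[ℝ]) :
    (q⁻¹ * h * q * star h * a).re = normSq h * a.re := by
  rw [mul_assoc q⁻¹, hhq.eq, inv_mul_cancel_left₀ hq, self_mul_star, coe_mul_eq_smul, re_smul,
    smul_eq_mul]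

theorem exp_ne_zero (x : ℍ[ℝ]) : NormedSpace.exp x ≠ 0 :=
  norm_ne_zero_iff.mp (by simp [norm_exp, ← Real.exp_eq_exp_ℝ, Real.exp_ne_zero])

end Quaternion

@[simp] lemma qi_re : qi.re = 0 := rfl
@[simp] lemma qi_imI : qi.imI = 1 := rfl
@[simp] lemma qi_imJ : qi.imJ = 0 := rfl
@[simp] lemma qj_re : qj.re = 0 := rfl
@[simp] lemma qj_imI : qj.imI = 0 := rfl
@[simp] lemma qj_imJ : qj.imJ = 1 := rfl
@[simp] lemma qj_imK : qj.imK = 0 := rfl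

lemma qi_ne_zero : qi ≠ 0 := fun h => by simpa using congrArg (·.imI) h

lemma qj_im : qj.im = qj := rfl

lemma qj_mul_self : qj * qj = -1 := by ext <;> simp

lemma norm_qj : ‖qj‖ = 1 := by
  have h : ‖qj‖ * ‖qj‖ = 1 := by simp [← normSq_eq_norm_mul_self, normSq_def']
  nlinarith [norm_nonneg qj]

lemma commute_smul_qj (ε c s : ℝ) : Commute (ε • qj) (↑c + s • qj) :=
  (coe_commute c _).symm.add_right (((Commute.refl qj).smul_left ε).smul_right s)

theorem four_points_in_NAT_general (s ε₁ ε₂ : ℝ)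
    (a b f h p q : ℍ[ℝ])
    (ha : a = qi) (hb : b = qj) (hf : f = ε₁ • qi) (hh : h = ε₂ • qj)
    (hp : p = 1)
    (hq : q = (Real.cos (s * ε₁ * ε₂) : ℍ[ℝ]) + Real.sin (s * ε₁ * ε₂) • qj) :
    Quaternion.im (b * h) = 0 ∧ p = NormedSpace.exp (s • Quaternion.im (b * h)) ∧
    Quaternion.im (f * a⁻¹ * h) = (ε₁ * ε₂) • qj ∧
      q = NormedSpace.exp (s • Quaternion.im (f * a⁻¹ * h)) ∧
    (p * q * star h * a).re = 0 ∧
    (p * q * star h * a * star h).re = 0 ∧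
    (q⁻¹ * p⁻¹ * h * p * q * star h * a).re = 0 ∧
    (h * star a).re = 0 := by
  subst ha hb hf hh hp hq
  have him_bh : (qj * (ε₂ • qj)).im = 0 := by simp [qj_mul_self]
  have him_fah : (ε₁ • qi * qi⁻¹ * (ε₂ • qj)).im = (ε₁ * ε₂) • qj := by
    rw [smul_mul_assoc, mul_inv_cancel₀ qi_ne_zero, smul_mul_assoc, one_mul, smul_smul, im_smul,
      qj_im]
  have hq_exp : (Real.cos (s * ε₁ * ε₂) : ℍ[ℝ]) + Real.sin (s * ε₁ * ε₂) • qj =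
      NormedSpace.exp (s • (ε₁ • qi * qi⁻¹ * (ε₂ • qj)).im) := by
    rw [him_fah, smul_smul, ← mul_assoc, exp_smul_of_re_eq_zero_of_norm_eq_one qj_re norm_qj]
  refine ⟨him_bh, by rw [him_bh, smul_zero, NormedSpace.exp_zero], him_fah, hq_exp, ?_, ?_, ?_, ?_⟩
  · simp [re_mul]
  · simp [re_mul]
  · rw [inv_one, mul_one, mul_one, re_inv_mul_mul_mul_star_mul _ (commute_smul_qj _ _ _), qi_re,
      mul_zero]
    exact hq_exp ▸ exp_ne_zero _
  · simp [re_mul]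

/-- Proposition 7.2 of the paper: the four points `[π/2, 0, 0, 0]`, `[π/2, 0, 0, π]`,
`[π/2, π, 0, 0]`, `[π/2, π, 0, π]` satisfy both the earring equations `G = 0` and the bypass
equations `G' = 0` (together with the perturbation conditions), hence lie in `N_s` and `N'_s`
for every `s`. -/
theorem four_points_in_NAT (s ε₁ ε₂ : ℝ)
    (hε₁ : ε₁ = 1 ∨ ε₁ = -1) (hε₂ : ε₂ = 1 ∨ ε₂ = -1)
    (a b f h p q : ℍ[ℝ])
    (ha : a = qi) (hb : b = qj) (hf : f = ε₁ • qi) (hh : h = ε₂ • qj)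
    (hp : p = 1)
    (hq : q = (Real.cos (s * ε₁ * ε₂) : ℍ[ℝ]) + Real.sin (s * ε₁ * ε₂) • qj) :
    Quaternion.im (b * h) = 0 ∧ p = NormedSpace.exp (s • Quaternion.im (b * h)) ∧
    Quaternion.im (f * a⁻¹ * h) = (ε₁ * ε₂) • qj ∧
      q = NormedSpace.exp (s • Quaternion.im (f * a⁻¹ * h)) ∧
    (p * q * star h * a).re = 0 ∧
    (p * q * star h * a * star h).re = 0 ∧
    (q⁻¹ * p⁻¹ * h * p * q * star h * a).re = 0 ∧
    (h * star a).re = 0 :=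
  four_points_in_NAT_general s ε₁ ε₂ a b f h p q ha hb hf hh hp hq
end

section
/- Let s ∈ ℝ and ε₁, ε₂ ∈ {−1, 1}. Set a = i, b = j, f = ε₁·i, p = 1, q = cos(s ε₁ ε₂) + sin(s ε₁ ε₂)·j. Then q⁻¹ * p⁻¹ * b * p * q = j and q⁻¹ * p⁻¹ * b⁻¹ * p * b * a * f⁻¹ * q * f = i. (The computation in the proof of Proposition 7.2 of the paper: for the representations ρ_ε, the boundary words satisfy ρ_ε(c) = j and ρ_ε(d) = i, which is the key step showing that the involution U_s fixes the corresponding four points of N_s and N'_s.) -/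
open Quaternion

lemma qj_ne_zero : qj ≠ 0 := fun h => by simpa [qj] using congrArg QuaternionAlgebra.imJ h

lemma normSq_coe_add_smul_qj (x y : ℝ) : normSq ((x : ℍ[ℝ]) + y • qj) = x ^ 2 + y ^ 2 := by
  simp only [normSq_def', re_add, re_coe, re_smul, smul_eq_mul, imI_add, imI_coe, imI_smul,
    zero_add, imJ_add, imJ_coe, imJ_smul, imK_add, imK_coe, imK_smul]
  simp [qj]

lemma commute_coe_add_smul_qj (x y : ℝ) : Commute ((x : ℍ[ℝ]) + y • qj) qj :=
  (Algebra.commute_algebraMap_left x qj).add_left ((Commute.refl qj).smul_left y)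

lemma inv_mul_mul_self_of_commute {G₀ : Type*} [GroupWithZero G₀] {q b : G₀} (hq : q ≠ 0)
    (h : Commute q b) : q⁻¹ * b * q = b := by
  rw [h.inv_left₀.eq, inv_mul_cancel_right₀ hq]

section DivisionAlgebra

variable {K A : Type*} [Field K] [DivisionRing A] [Algebra K A]

lemma mul_inv_smul_self {a : A} (ha : a ≠ 0) (c : K) : a * (c • a)⁻¹ = algebraMap K A c⁻¹ := by
  rw [smul_inv₀, mul_smul_comm, mul_inv_cancel₀ ha, Algebra.algebraMap_eq_smul_one]

lemma inv_mul_mul_inv_smul_mul_smul {q a : A} {c : K} (hq : q ≠ 0) (ha : a ≠ 0) (hc : c ≠ 0) :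
    q⁻¹ * (a * (c • a)⁻¹) * q * (c • a) = a := by
  rw [mul_inv_smul_self ha, inv_mul_mul_self_of_commute hq (Algebra.commute_algebraMap_right _ _),
    ← Algebra.smul_def, smul_smul, inv_mul_cancel₀ hc, one_smul]

end DivisionAlgebra

theorem boundary_words_at_four_points_general (s ε₁ ε₂ : ℝ)
    (hε₁ : ε₁ = 1 ∨ ε₁ = -1)
    (a b f p q : ℍ[ℝ])
    (ha : a = qi) (hb : b = qj) (hf : f = ε₁ • qi)
    (hp : p = 1)
    (hq : q = (Real.cos (s * ε₁ * ε₂) : ℍ[ℝ]) + Real.sin (s * ε₁ * ε₂) • qj) :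
    q⁻¹ * p⁻¹ * b * p * q = qj ∧
    q⁻¹ * p⁻¹ * b⁻¹ * p * b * a * f⁻¹ * q * f = qi := by
  have hq0 : q ≠ 0 := by
    rw [← normSq_ne_zero, hq, normSq_coe_add_smul_qj, Real.cos_sq_add_sin_sq]
    exact one_ne_zero
  have hqj : Commute q qj := hq ▸ commute_coe_add_smul_qj _ _
  have hε₁0 : ε₁ ≠ 0 := by rcases hε₁ with rfl | rfl <;> norm_num
  subst ha hb hf hp
  simp only [inv_one, mul_one]
  refine ⟨inv_mul_mul_self_of_commute hq0 hqj, ?_⟩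
  rw [mul_assoc q⁻¹, inv_mul_cancel₀ qj_ne_zero, mul_one, mul_assoc q⁻¹]
  exact inv_mul_mul_inv_smul_mul_smul hq0 qi_ne_zero hε₁0

/-- The computation in the proof of Proposition 7.2 of the paper: for the representations
`ρ_ε`, the boundary words satisfy `ρ_ε(c) = j` and `ρ_ε(d) = i`, where `c = q̄ p̄ b p q` and
`d = q̄ p̄ b̄ p b a f̄ q f`. -/
theorem boundary_words_at_four_points (s ε₁ ε₂ : ℝ)
    (hε₁ : ε₁ = 1 ∨ ε₁ = -1) (hε₂ : ε₂ = 1 ∨ ε₂ = -1)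
    (a b f p q : ℍ[ℝ])
    (ha : a = qi) (hb : b = qj) (hf : f = ε₁ • qi)
    (hp : p = 1)
    (hq : q = (Real.cos (s * ε₁ * ε₂) : ℍ[ℝ]) + Real.sin (s * ε₁ * ε₂) • qj) :
    q⁻¹ * p⁻¹ * b * p * q = qj ∧
    q⁻¹ * p⁻¹ * b⁻¹ * p * b * a * f⁻¹ * q * f = qi :=
  boundary_words_at_four_points_general s ε₁ ε₂ hε₁ a b f p q ha hb hf hp hq
end

section
/- Let s ∈ ℝ with 0 < |s| < π/2, and let σ₁, σ₂ ∈ [0, 2π) with σ₁ ≠ σ₂. If cos σ₁ = cos σ₂, cos(2s·cos σ₁) = cos(2s·cos σ₂), and cos(σ₁ + 2s·cos σ₁) = cos(σ₂ + 2s·cos σ₂), then {σ₁, σ₂} = {π/2, 3π/2}. (The double-point analysis in the proof of Proposition 7.6 of the paper: for small nonzero s, the figure-eight curve σ ↦ (cos σ, cos(2s cos σ), cos(σ + 2s cos σ)) in the pillowcase has exactly one self-intersection, occurring at the parameters σ = ±π/2.) -/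
open Real

/-- The double-point analysis in the proof of Proposition 7.6 of the paper: for
`0 < |s| < π/2`, if two distinct parameters `σ₁ ≠ σ₂` in `[0, 2π)` give the same point of the
figure-eight curve `σ ↦ (cos σ, cos(2s cos σ), cos(σ + 2s cos σ))`, then
`{σ₁, σ₂} = {π/2, 3π/2}`. -/
theorem figure_eight_single_double_point (s σ₁ σ₂ : ℝ)
    (hs : 0 < |s|) (hs' : |s| < π / 2)
    (hσ₁ : σ₁ ∈ Set.Ico (0 : ℝ) (2 * π)) (hσ₂ : σ₂ ∈ Set.Ico (0 : ℝ) (2 * π))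
    (hne : σ₁ ≠ σ₂)
    (h1 : cos σ₁ = cos σ₂)
    (h2 : cos (2 * s * cos σ₁) = cos (2 * s * cos σ₂))
    (h3 : cos (σ₁ + 2 * s * cos σ₁) = cos (σ₂ + 2 * s * cos σ₂)) :
    ({σ₁, σ₂} : Set ℝ) = {π / 2, 3 * π / 2} := by
  have hπ := Real.pi_pos
  obtain ⟨h1l, h1r⟩ := hσ₁
  obtain ⟨h2l, h2r⟩ := hσ₂
  have hs0 : s ≠ 0 := by
    intro h; rw [h, abs_zero] at hs; exact lt_irrefl 0 hs
  -- From h1: σ₁ + σ₂ = 2π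
  have hsum : σ₁ + σ₂ = 2 * π := by
    obtain ⟨k, hk | hk⟩ := Real.cos_eq_cos_iff.mp h1
    · -- σ₂ = 2kπ + σ₁, must have k = 0 hence σ₁ = σ₂, contradiction
      exfalso
      have hklt : (k : ℝ) < 1 := by nlinarith
      have hkgt : (-1 : ℝ) < (k : ℝ) := by nlinarith
      have hk1 : k < 1 := by exact_mod_cast hklt
      have hk2 : -1 < k := by exact_mod_cast hkgt
      have : k = 0 := by omega
      rw [this] at hk; push_cast at hk
      exact hne (by linarith)
    · -- σ₂ = 2kπ - σ₁
      have hklt : (k : ℝ) < 2 := by nlinarith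
      have hkgt : (0 : ℝ) ≤ (k : ℝ) := by nlinarith
      have hk1 : k < 2 := by exact_mod_cast hklt
      have hk2 : 0 ≤ k := by exact_mod_cast hkgt
      interval_cases k
      · exfalso; push_cast at hk
        have hσ10 : σ₁ = 0 := by linarith
        have hσ20 : σ₂ = 0 := by linarith
        exact hne (by rw [hσ10, hσ20])
      · push_cast at hk; linarith
  set a := 2 * s * cos σ₁ with ha
  have hcc : cos σ₂ = cos σ₁ := h1.symm
  rw [hcc] at h3
  -- From h3: cos σ₁ = 0
  have hcos0 : cos σ₁ = 0 := by
    obtain ⟨m, hm | hm⟩ := Real.cos_eq_cos_iff.mp h3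
    · exfalso
      have hklt : (m : ℝ) < 1 := by nlinarith
      have hkgt : (-1 : ℝ) < (m : ℝ) := by nlinarith
      have hk1 : m < 1 := by exact_mod_cast hklt
      have hk2 : -1 < m := by exact_mod_cast hkgt
      have : m = 0 := by omega
      rw [this] at hm; push_cast at hm
      exact hne (by linarith)
    · -- σ₂ + a = 2mπ - (σ₁ + a), so 2π + 2a = 2mπ, a = (m-1)π
      have haeq : a = ((m : ℝ) - 1) * π := by linarith [hsum, hm]
      have habs : |a| < π := by
        have h1 : |a| = 2 * |s| * |cos σ₁| := by
          rw [ha, abs_mul, abs_mul, abs_two]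
        have h2 : |cos σ₁| ≤ 1 := Real.abs_cos_le_one σ₁
        calc |a| = 2 * |s| * |cos σ₁| := h1
          _ ≤ 2 * |s| * 1 := by nlinarith
          _ < π := by nlinarith
      have hm1 : m = 1 := by
        rw [haeq, abs_mul, abs_of_pos hπ] at habs
        have : |(m : ℝ) - 1| < 1 := by
          by_contra hcon
          push_neg at hcon
          nlinarith
        rw [abs_sub_lt_iff] at this
        have hk1 : (m : ℝ) < 2 := by linarith
        have hk2 : (0 : ℝ) < (m : ℝ) := by linarith
        have hk1' : m < 2 := by exact_mod_cast hk1
        have hk2' : 0 < m := by exact_mod_cast hk2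
        omega
      rw [hm1] at haeq; push_cast at haeq
      have ha0 : a = 0 := by linarith
      rw [ha] at ha0
      rcases mul_eq_zero.mp ha0 with h | h
      · exfalso; rcases mul_eq_zero.mp h with h' | h'
        · norm_num at h'
        · exact hs0 h'
      · exact h
  -- cos σ₁ = 0 with σ₁ ∈ [0, 2π) : σ₁ = π/2 or 3π/2
  obtain ⟨n, hn⟩ := Real.cos_eq_zero_iff.mp hcos0
  have hn0 : 0 ≤ n := by
    by_contra hcon
    push_neg at hcon
    have hn' : n ≤ -1 := by omega
    have : (n : ℝ) ≤ -1 := by exact_mod_cast hn'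
    nlinarith
  have hn1 : n ≤ 1 := by
    by_contra hcon
    push_neg at hcon
    have hn' : 2 ≤ n := by omega
    have : (2 : ℝ) ≤ (n : ℝ) := by exact_mod_cast hn'
    nlinarith
  interval_cases n
  · -- σ₁ = π/2, σ₂ = 3π/2
    push_cast at hn
    have hσ1 : σ₁ = π / 2 := by linarith
    have hσ2 : σ₂ = 3 * π / 2 := by linarith
    rw [hσ1, hσ2]
  · push_cast at hn
    have hσ1 : σ₁ = 3 * π / 2 := by linarith
    have hσ2 : σ₂ = π / 2 := by linarith
    rw [hσ1, hσ2, Set.pair_comm]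
end
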